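/- arXiv:2007.01824 — 12 statements merged into one kernel-verified Lean document; each statement's English description precedes it below -/
import Mathlib

section
/- If X is a set star-Lindelöf space, then every clopen (simultaneously open and closed) subspace of X is set star-Lindelöf. -/
open Set TopologicalSpace

/-- The star of a set `A` with respect to a collection `U`:
`St(A,U) = ⋃ {V ∈ U : V ∩ A ≠ ∅}`. -/
def st {X : Type*} (A : Set X) (U : Set (Set X)) : Set X :=
  ⋃₀ {V | V ∈ U ∧ (V ∩ A).Nonempty}

/-- A space is set strongly star-Lindelöf if for every nonempty `A` and every collection of
open sets `U` with `closure A ⊆ ⋃₀ U`, there is a countable `F ⊆ closure A` with `A ⊆ St(F,U)`. -/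
def SetStronglyStarLindelof (X : Type*) [TopologicalSpace X] : Prop :=
  ∀ A : Set X, A.Nonempty → ∀ U : Set (Set X), (∀ V ∈ U, IsOpen V) →
    closure A ⊆ ⋃₀ U →
    ∃ F : Set X, F.Countable ∧ F ⊆ closure A ∧ A ⊆ st F U

/-- A space is set star-Lindelöf if for every nonempty `A` and every collection of open sets `U`
with `closure A ⊆ ⋃₀ U`, there is a countable `V ⊆ U` with `A ⊆ St(⋃₀ V, U)`. -/
def SetStarLindelof (X : Type*) [TopologicalSpace X] : Prop :=
  ∀ A : Set X, A.Nonempty → ∀ U : Set (Set X), (∀ V ∈ U, IsOpen V) →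
    closure A ⊆ ⋃₀ U →
    ∃ V : Set (Set X), V.Countable ∧ V ⊆ U ∧ A ⊆ st (⋃₀ V) U

/-- A space is strongly star-Lindelöf if for every open cover `U`
there is a countable `F` with `X = St(F,U)`. -/
def StronglyStarLindelof (X : Type*) [TopologicalSpace X] : Prop :=
  ∀ U : Set (Set X), (∀ V ∈ U, IsOpen V) → ⋃₀ U = univ →
    ∃ F : Set X, F.Countable ∧ st F U = univ

/-- A space is star-Lindelöf if for every open cover `U`
there is a countable `V ⊆ U` with `X = St(⋃₀ V, U)`. -/
def StarLindelof (X : Type*) [TopologicalSpace X] : Prop :=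
  ∀ U : Set (Set X), (∀ V ∈ U, IsOpen V) → ⋃₀ U = univ →
    ∃ V : Set (Set X), V.Countable ∧ V ⊆ U ∧ st (⋃₀ V) U = univ

/-- Every clopen subspace of a set star-Lindelöf space is set star-Lindelöf. -/
theorem clopen_subspace_setStarLindelof {X : Type*} [TopologicalSpace X]
    (h : SetStarLindelof X) (S : Set X) (hS : IsClopen S) : SetStarLindelof S := by
  intro A hA U hU hcov
  set U' : Set (Set X) := (fun V => (Subtype.val : S → X) '' V) '' U with hU'def
  have hopen : ∀ W ∈ U', IsOpen W := by
    rintro _ ⟨V, hV, rfl⟩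
    exact hS.isOpen.isOpenMap_subtype_val _ (hU V hV)
  have hce : Topology.IsClosedEmbedding (Subtype.val : S → X) :=
    Topology.IsClosedEmbedding.subtypeVal hS.isClosed
  have hclim : closure ((Subtype.val : S → X) '' A) = Subtype.val '' closure A :=
    hce.closure_image_eq A
  have hcov' : closure ((Subtype.val : S → X) '' A) ⊆ ⋃₀ U' := by
    rw [hclim]
    rintro _ ⟨t, ht, rfl⟩
    obtain ⟨V, hV, htV⟩ := hcov ht
    exact ⟨Subtype.val '' V, ⟨V, hV, rfl⟩, ⟨t, htV, rfl⟩⟩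
  obtain ⟨V', hVc, hVsub, hst⟩ := h ((Subtype.val : S → X) '' A) (hA.image _) U' hopen hcov'
  refine ⟨(fun W => (Subtype.val : S → X) ⁻¹' W) '' V', hVc.image _, ?_, ?_⟩
  · rintro _ ⟨W, hW, rfl⟩
    obtain ⟨V, hV, rfl⟩ := hVsub hW
    simpa [Set.preimage_image_eq V Subtype.val_injective] using hV
  · intro a ha
    obtain ⟨W, ⟨hWU, x, hxW, hxV'⟩, haW⟩ := hst ⟨a, ha, rfl⟩
    obtain ⟨V, hV, rfl⟩ := hWU
    obtain ⟨s, hsV, rfl⟩ := hxW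
    obtain ⟨W0, hW0, hxW0⟩ := hxV'
    refine ⟨V, ⟨hV, s, hsV, ?_⟩, ?_⟩
    · exact ⟨Subtype.val ⁻¹' W0, ⟨W0, hW0, rfl⟩, hxW0⟩
    · rcases haW with ⟨b, hbV, hba⟩
      rwa [Subtype.val_injective hba] at hbV
end

section
/- If X is a set strongly star-Lindelöf space, then every clopen (simultaneously open and closed) subspace of X is set strongly star-Lindelöf. -/
open Set TopologicalSpace

/-- Every clopen subspace of a set strongly star-Lindelöf space is set strongly star-Lindelöf. -/
theorem clopen_subspace_setStronglyStarLindelof {X : Type*} [TopologicalSpace X]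
    (h : SetStronglyStarLindelof X) (S : Set X) (hS : IsClopen S) :
    SetStronglyStarLindelof S := by
  intro A hA U hUopen hcov
  have hemb : Topology.IsClosedEmbedding (Subtype.val : S → X) :=
    hS.isClosed.isClosedEmbedding_subtypeVal
  have hopenmap : IsOpenMap (Subtype.val : S → X) := hS.isOpen.isOpenMap_subtype_val
  set U' : Set (Set X) := (image (Subtype.val : S → X)) '' U with hU'
  have hU'open : ∀ V ∈ U', IsOpen V := by
    rintro _ ⟨V, hV, rfl⟩
    exact hopenmap _ (hUopen V hV)
  have hclA : closure ((Subtype.val : S → X) '' A) = Subtype.val '' closure A :=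
    hemb.closure_image_eq A
  have hcov' : closure ((Subtype.val : S → X) '' A) ⊆ ⋃₀ U' := by
    rw [hclA]
    rintro _ ⟨a, ha, rfl⟩
    obtain ⟨V, hV, haV⟩ := hcov ha
    exact ⟨Subtype.val '' V, ⟨V, hV, rfl⟩, ⟨a, haV, rfl⟩⟩
  obtain ⟨F, hFc, hFsub, hFst⟩ := h (Subtype.val '' A) (hA.image _) U' hU'open hcov'
  refine ⟨Subtype.val ⁻¹' F, hFc.preimage Subtype.val_injective, ?_, ?_⟩
  · intro x hx
    have : (x : X) ∈ Subtype.val '' closure A := hclA ▸ hFsub hx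
    obtain ⟨y, hy, hyx⟩ := this
    rwa [← Subtype.val_injective hyx]
  · intro a ha
    obtain ⟨W, ⟨⟨V, hVU, rfl⟩, z, hzV, hzF⟩, haW⟩ := hFst ⟨a, ha, rfl⟩
    obtain ⟨v, hvV, hvz⟩ := hzV
    obtain ⟨a', ha'V, ha'a⟩ := haW
    refine ⟨V, ⟨hVU, v, hvV, ?_⟩, ?_⟩
    · simpa [hvz] using hzF
    · rwa [← Subtype.val_injective ha'a]
end

section
/- The continuous image of a set star-Lindelöf space is set star-Lindelöf: if f : X → Y is a continuous surjection and X is set star-Lindelöf, then Y is set star-Lindelöf. -/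
open Set TopologicalSpace

/-- A continuous image of a set star-Lindelöf space is set star-Lindelöf. -/
theorem continuous_image_setStarLindelof {X Y : Type*} [TopologicalSpace X] [TopologicalSpace Y]
    (f : X → Y) (hf : Continuous f) (hsurj : Function.Surjective f)
    (h : SetStarLindelof X) : SetStarLindelof Y := by
  intro A hA U hUopen hcov
  set A' : Set X := f ⁻¹' A with hA'
  set U' : Set (Set X) := (fun V => f ⁻¹' V) '' U with hU'
  have hA'ne : A'.Nonempty := by
    obtain ⟨a, ha⟩ := hA
    obtain ⟨x, rfl⟩ := hsurj a
    exact ⟨x, ha⟩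
  have hU'open : ∀ W ∈ U', IsOpen W := by
    rintro W ⟨V, hV, rfl⟩
    exact (hUopen V hV).preimage hf
  have hcov' : closure A' ⊆ ⋃₀ U' := by
    intro x hx
    have hx' : f x ∈ closure A := by
      have := (hf.closure_preimage_subset A) hx
      exact this
    obtain ⟨V, hV, hxV⟩ := hcov hx'
    exact ⟨f ⁻¹' V, ⟨V, hV, rfl⟩, hxV⟩
  obtain ⟨V', hV'c, hV'sub, hst⟩ := h A' hA'ne U' hU'open hcov'
  -- choose a preimage in U for each element of V'
  have hchoice : ∀ W ∈ V', ∃ V ∈ U, f ⁻¹' V = W := by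
    intro W hW
    obtain ⟨V, hV, rfl⟩ := hV'sub hW
    exact ⟨V, hV, rfl⟩
  choose g hg1 hg2 using hchoice
  refine ⟨{V | ∃ W, ∃ hW : W ∈ V', g W hW = V}, ?_, ?_, ?_⟩
  · have key : {V | ∃ W, ∃ hW : W ∈ V', g W hW = V} =
        (fun w : V' => g w.1 w.2) '' univ := by
      ext V
      simp only [mem_setOf_eq, mem_image, mem_univ, true_and]
      constructor
      · rintro ⟨W, hW, rfl⟩; exact ⟨⟨W, hW⟩, rfl⟩
      · rintro ⟨⟨W, hW⟩, rfl⟩; exact ⟨W, hW, rfl⟩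
    haveI := hV'c.to_subtype
    rw [key, image_univ]
    exact countable_range _
  · rintro V ⟨W, hW, rfl⟩
    exact hg1 W hW
  · intro a ha
    obtain ⟨x, rfl⟩ := hsurj a
    obtain ⟨W', ⟨hW'U, z, hzW', hz⟩, hxW'⟩ := hst ha
    obtain ⟨V, hVU, rfl⟩ := hW'U
    refine ⟨V, ⟨hVU, f z, hzW', ?_⟩, hxW'⟩
    obtain ⟨W0, hW0, hzW0⟩ := hz
    exact ⟨g W0 hW0, ⟨W0, hW0, rfl⟩, by rw [← hg2 W0 hW0] at hzW0; exact hzW0⟩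
end

section
/- The continuous image of a set strongly star-Lindelöf space is set strongly star-Lindelöf: if f : X → Y is a continuous surjection and X is set strongly star-Lindelöf, then Y is set strongly star-Lindelöf. -/
open Set TopologicalSpace

/-- A continuous image of a set strongly star-Lindelöf space is set strongly star-Lindelöf. -/
theorem continuous_image_setStronglyStarLindelof {X Y : Type*} [TopologicalSpace X]
    [TopologicalSpace Y] (f : X → Y) (hf : Continuous f) (hsurj : Function.Surjective f)
    (h : SetStronglyStarLindelof X) : SetStronglyStarLindelof Y := by
  intro A hA U hU hcov
  set A' : Set X := f ⁻¹' A with hA'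
  have hA'ne : A'.Nonempty := by
    obtain ⟨y, hy⟩ := hA
    obtain ⟨x, rfl⟩ := hsurj y
    exact ⟨x, hy⟩
  set U' : Set (Set X) := (fun V => f ⁻¹' V) '' U with hU'
  have hU'open : ∀ V ∈ U', IsOpen V := by
    rintro _ ⟨V, hV, rfl⟩
    exact (hU V hV).preimage hf
  have hcov' : closure A' ⊆ ⋃₀ U' := by
    intro x hx
    have hx' : f x ∈ closure A := by
      have := (hf.closure_preimage_subset A) hx
      exact this
    obtain ⟨V, hV, hxV⟩ := hcov hx'
    exact ⟨f ⁻¹' V, ⟨V, hV, rfl⟩, hxV⟩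
  obtain ⟨F, hFc, hFsub, hFst⟩ := h A' hA'ne U' hU'open hcov'
  refine ⟨f '' F, hFc.image f, ?_, ?_⟩
  · intro y hy
    obtain ⟨x, hx, rfl⟩ := hy
    have : f x ∈ closure (f '' A') := (image_closure_subset_closure_image hf) ⟨x, hFsub hx, rfl⟩
    rwa [image_preimage_eq A hsurj] at this
  · intro y hy
    obtain ⟨x, rfl⟩ := hsurj y
    obtain ⟨W, ⟨⟨V, hV, rfl⟩, ⟨z, hzV, hzF⟩⟩, hxW⟩ := hFst hy
    exact ⟨V, ⟨hV, ⟨f z, hzV, ⟨z, hzF, rfl⟩⟩⟩, hxW⟩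
end

section
/- If the Alexandroff duplicate A(X) of a space X is set star-Lindelöf, then X is set star-Lindelöf. -/
open Set TopologicalSpace

/-- The Alexandroff duplicate topology on `X × Bool`: each point `(x, true)` is isolated, and
basic neighborhoods of `(x, false)` are `(U × {false}) ∪ ((U × {true}) \ {(x, true)})`
for `U` an open neighborhood of `x`. -/
def alexandroffDuplicate (X : Type*) [TopologicalSpace X] : TopologicalSpace (X × Bool) :=
  generateFrom
    ({S | ∃ x : X, S = {(x, true)}} ∪
     {S | ∃ (x : X) (U : Set X), IsOpen U ∧ x ∈ U ∧
        S = U ×ˢ ({false} : Set Bool) ∪ (U ×ˢ ({true} : Set Bool) \ {(x, true)})})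

open Topology in
lemma ad_isOpen_prod_univ {X : Type*} [TopologicalSpace X] {W : Set X} (hW : IsOpen W) :
    IsOpen[alexandroffDuplicate X] (W ×ˢ (univ : Set Bool)) := by
  letI : TopologicalSpace (X × Bool) := alexandroffDuplicate X
  rcases W.eq_empty_or_nonempty with rfl | ⟨x, hx⟩
  · simp only [empty_prod]; exact isOpen_empty
  · have heq : W ×ˢ (univ : Set Bool) =
        ({(x, true)} : Set (X × Bool)) ∪
          (W ×ˢ ({false} : Set Bool) ∪ (W ×ˢ ({true} : Set Bool) \ {(x, true)})) := by
      ext ⟨y, b⟩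
      cases b <;> by_cases hxy : y = x <;> simp [Prod.ext_iff, hxy, hx]
    rw [heq]
    exact IsOpen.union
      (isOpen_generateFrom_of_mem (Or.inl ⟨x, rfl⟩))
      (isOpen_generateFrom_of_mem (Or.inr ⟨x, W, hW, hx, rfl⟩))

/-- If the Alexandroff duplicate of `X` is set star-Lindelöf, so is `X`. -/
theorem setStarLindelof_of_alexandroffDuplicate {X : Type*} [TopologicalSpace X]
    (h : @SetStarLindelof (X × Bool) (alexandroffDuplicate X)) : SetStarLindelof X := by
  intro A hA U hUopen hcov
  letI : TopologicalSpace (X × Bool) := alexandroffDuplicate X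
  set f : Set X → Set (X × Bool) := fun W => W ×ˢ (univ : Set Bool) with hf
  have hfinj : Function.Injective f := by
    intro W₁ W₂ hW
    ext y
    constructor <;> intro hy
    · have : (y, false) ∈ f W₂ := hW ▸ (by simp [hf, hy])
      simpa [hf] using this
    · have : (y, false) ∈ f W₁ := hW.symm ▸ (by simp [hf, hy])
      simpa [hf] using this
  set U' : Set (Set (X × Bool)) := f '' U with hU'
  set A' : Set (X × Bool) := A ×ˢ ({false} : Set Bool) with hA'def
  have hA' : A'.Nonempty := ⟨(hA.choose, false), by simp [hA'def, hA.choose_spec]⟩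
  have hU'open : ∀ V ∈ U', IsOpen V := by
    rintro _ ⟨W, hW, rfl⟩
    exact ad_isOpen_prod_univ (hUopen W hW)
  have hclosed : IsClosed (closure A ×ˢ (univ : Set Bool)) := by
    have heq : (closure A ×ˢ (univ : Set Bool))ᶜ = (closure A)ᶜ ×ˢ (univ : Set Bool) := by
      ext ⟨y, b⟩; simp
    refine ⟨?_⟩
    rw [heq]
    exact ad_isOpen_prod_univ isClosed_closure.isOpen_compl
  have hclA' : closure A' ⊆ closure A ×ˢ (univ : Set Bool) := by
    apply closure_minimal _ hclosed
    rintro ⟨y, b⟩ hy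
    simp only [hA'def, mem_prod] at hy ⊢
    exact ⟨subset_closure hy.1, trivial⟩
  have hcov' : closure A' ⊆ ⋃₀ U' := by
    intro p hp
    have hp' := hclA' hp
    obtain ⟨y, b⟩ := p
    simp only [mem_prod] at hp'
    obtain ⟨W, hWU, hyW⟩ := hcov hp'.1
    exact ⟨f W, ⟨W, hWU, rfl⟩, by simp [hf, hyW]⟩
  obtain ⟨V', hV'c, hV'U', hst⟩ := h A' hA' U' hU'open hcov'
  refine ⟨f ⁻¹' V' ∩ U, (hV'c.preimage hfinj).mono inter_subset_left, inter_subset_right, ?_⟩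
  intro x hx
  have hxst : (x, false) ∈ st (⋃₀ V') U' := hst (by simp [hA'def, hx])
  obtain ⟨G, ⟨hGU', ⟨p, hpG, hpV'⟩⟩, hxG⟩ := hxst
  obtain ⟨W, hWU, rfl⟩ := hGU'
  obtain ⟨G', hG'V', hpG'⟩ := hpV'
  obtain ⟨W', hW'U, rfl⟩ := hV'U' hG'V'
  have hxW : x ∈ W := by simpa [hf] using hxG
  have hpW : p.1 ∈ W := by
    have := hpG; simp only [hf, mem_prod] at this; exact this.1
  have hpW' : p.1 ∈ W' := by
    have := hpG'; simp only [hf, mem_prod] at this; exact this.1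
  exact ⟨W, ⟨hWU, ⟨p.1, hpW, ⟨W', ⟨hG'V', hW'U⟩, hpW'⟩⟩⟩, hxW⟩
end

section
/- If the Alexandroff duplicate A(X) of a space X is set strongly star-Lindelöf, then X is set strongly star-Lindelöf. -/
open Set TopologicalSpace

lemma AD.isOpen_singleton_true {X : Type*} [TopologicalSpace X] (x : X) :
    (alexandroffDuplicate X).IsOpen {(x, true)} :=
  TopologicalSpace.GenerateOpen.basic _ (Or.inl ⟨x, rfl⟩)

lemma AD.isOpen_prod_univ {X : Type*} [TopologicalSpace X] {V : Set X} (hV : IsOpen V) :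
    (alexandroffDuplicate X).IsOpen (V ×ˢ (univ : Set Bool)) := by
  have hrw : V ×ˢ (univ : Set Bool) =
      ⋃₀ (({S | ∃ x ∈ V, S = {(x, true)}} : Set (Set (X × Bool))) ∪
        {S | ∃ x ∈ V,
          S = V ×ˢ ({false} : Set Bool) ∪ (V ×ˢ ({true} : Set Bool) \ {(x, true)})}) := by
    ext ⟨x, b⟩
    constructor
    · rintro ⟨hx, -⟩
      cases b
      · exact ⟨_, Or.inr ⟨x, hx, rfl⟩, Or.inl ⟨hx, rfl⟩⟩
      · exact ⟨_, Or.inl ⟨x, hx, rfl⟩, rfl⟩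
    · rintro ⟨S, hS, hxS⟩
      rcases hS with ⟨y, hy, rfl⟩ | ⟨y, hy, rfl⟩
      · simp only [mem_singleton_iff, Prod.mk.injEq] at hxS
        exact ⟨hxS.1 ▸ hy, trivial⟩
      · rcases hxS with ⟨hx, -⟩ | ⟨⟨hx, -⟩, -⟩
        · exact ⟨hx, trivial⟩
        · exact ⟨hx, trivial⟩
  rw [hrw]
  apply TopologicalSpace.GenerateOpen.sUnion
  rintro S (⟨y, hy, rfl⟩ | ⟨y, hy, rfl⟩)
  · exact TopologicalSpace.GenerateOpen.basic _ (Or.inl ⟨y, rfl⟩)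
  · exact TopologicalSpace.GenerateOpen.basic _ (Or.inr ⟨y, V, hV, hy, rfl⟩)

lemma AD.continuous_fst {X : Type*} [TopologicalSpace X] :
    @Continuous _ _ (alexandroffDuplicate X) _ (Prod.fst : X × Bool → X) := by
  rw [continuous_def]
  intro V hV
  rw [← prod_univ]
  exact AD.isOpen_prod_univ hV

/-- If the Alexandroff duplicate of `X` is set strongly star-Lindelöf, so is `X`. -/
theorem setStronglyStarLindelof_of_alexandroffDuplicate {X : Type*} [TopologicalSpace X]
    (h : @SetStronglyStarLindelof (X × Bool) (alexandroffDuplicate X)) :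
    SetStronglyStarLindelof X := by
  intro A hA U hU hcov
  letI t : TopologicalSpace (X × Bool) := alexandroffDuplicate X
  set A' : Set (X × Bool) := A ×ˢ ({false} : Set Bool) with hA'def
  have hA' : A'.Nonempty := hA.prod ⟨false, rfl⟩
  set U' : Set (Set (X × Bool)) := (fun V => V ×ˢ (univ : Set Bool)) '' U with hU'def
  have hU'open : ∀ V ∈ U', IsOpen V := by
    rintro _ ⟨V, hV, rfl⟩
    exact AD.isOpen_prod_univ (hU V hV)
  -- closure of A' is contained in (closure A) × {false}
  have hclA' : closure A' ⊆ closure A ×ˢ ({false} : Set Bool) := by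
    rintro ⟨x, b⟩ hp
    have hb : b = false := by
      by_contra hb
      have hb' : b = true := by cases b <;> simp_all
      subst hb'
      have hopen : IsOpen ({(x, true)} : Set (X × Bool)) := AD.isOpen_singleton_true x
      have hsub : A' ⊆ ({(x, true)}ᶜ : Set (X × Bool)) := by
        rintro ⟨y, c⟩ ⟨-, hc⟩
        simp only [mem_singleton_iff] at hc
        subst hc
        simp [Prod.ext_iff]
      have hcl : closure A' ⊆ ({(x, true)}ᶜ : Set (X × Bool)) :=
        closure_minimal hsub hopen.isClosed_compl
      exact hcl hp rfl
    have hfst : x ∈ closure A := by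
      have h1 : A' ⊆ Prod.fst ⁻¹' A := by
        rintro ⟨y, c⟩ ⟨hy, -⟩; exact hy
      have h2 : closure A' ⊆ closure (Prod.fst ⁻¹' A) := closure_mono h1
      have hc : Continuous (Prod.fst : X × Bool → X) := AD.continuous_fst
      exact hc.closure_preimage_subset A (h2 hp)
    exact ⟨hfst, hb⟩
  have hcov' : closure A' ⊆ ⋃₀ U' := by
    intro p hp
    obtain ⟨hx, hb⟩ := hclA' hp
    obtain ⟨V, hV, hxV⟩ := hcov hx
    exact ⟨V ×ˢ (univ : Set Bool), ⟨V, hV, rfl⟩, hxV, trivial⟩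
  obtain ⟨F', hF'c, hF'sub, hF'st⟩ := h A' hA' U' hU'open hcov'
  refine ⟨Prod.fst '' F', hF'c.image _, ?_, ?_⟩
  · rintro _ ⟨p, hp, rfl⟩
    exact (hclA' (hF'sub hp)).1
  · intro x hx
    have hxA' : (x, false) ∈ A' := ⟨hx, rfl⟩
    obtain ⟨S, ⟨hSU', hSF'⟩, hxS⟩ := hF'st hxA'
    obtain ⟨V, hV, rfl⟩ := hSU'
    obtain ⟨p, hp1, hp2⟩ := hSF'
    exact ⟨V, ⟨hV, ⟨p.1, hp1.1, p, hp2, rfl⟩⟩, hxS.1⟩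
end

section
/- If X is a T1 space and the Alexandroff duplicate A(X) is set star-Lindelöf, then the extent of X is countable, i.e., every closed discrete subset of X is countable. -/
open Set TopologicalSpace

/-- If `X` is `T₁` and its Alexandroff duplicate is set star-Lindelöf, then every closed
discrete subset of `X` is countable (the extent of `X` is countable). -/
theorem extent_countable_of_alexandroffDuplicate_setStarLindelof {X : Type*} [TopologicalSpace X]
    [T1Space X] (h : @SetStarLindelof (X × Bool) (alexandroffDuplicate X)) :
    ∀ S : Set X, IsClosed S → DiscreteTopology S → S.Countable := by
  intro S hS hD
  rcases S.eq_empty_or_nonempty with rfl | hne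
  · exact countable_empty
  letI tY : TopologicalSpace (X × Bool) := alexandroffDuplicate X
  -- for each x, an open W with x ∈ W and W ∩ S ⊆ {x}
  have hW : ∀ x : X, ∃ W : Set X, IsOpen W ∧ x ∈ W ∧ W ∩ S ⊆ {x} := by
    intro x
    by_cases hx : x ∈ S
    · obtain ⟨W, hWopen, hWeq⟩ :=
        isOpen_induced_iff.mp (isOpen_discrete ({⟨x, hx⟩} : Set S))
      refine ⟨W, hWopen, ?_, ?_⟩
      · have : (⟨x, hx⟩ : S) ∈ (Subtype.val ⁻¹' W : Set S) := by
          rw [hWeq]; exact rfl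
        exact this
      · rintro y ⟨hyW, hyS⟩
        have : (⟨y, hyS⟩ : S) ∈ (Subtype.val ⁻¹' W : Set S) := hyW
        rw [hWeq] at this
        exact congrArg Subtype.val this
    · exact ⟨Sᶜ, hS.isOpen_compl, hx, fun y hy => absurd hy.2 hy.1⟩
  set A : Set (X × Bool) := (fun x => (x, true)) '' S with hAdef
  have hAne : A.Nonempty := hne.image _
  -- singletons {(x,true)} are open
  have hsing : ∀ x : X, IsOpen ({(x, true)} : Set (X × Bool)) :=
    fun x => TopologicalSpace.GenerateOpen.basic _ (Or.inl ⟨x, rfl⟩)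
  -- A is closed
  have hAclosed : IsClosed A := by
    rw [← isOpen_compl_iff, isOpen_iff_forall_mem_open]
    rintro ⟨x, b⟩ hp
    cases b with
    | true =>
      refine ⟨{(x, true)}, ?_, hsing x, rfl⟩
      rintro q hq
      rw [mem_singleton_iff] at hq
      subst hq
      intro hqA
      obtain ⟨y, hyS, hy⟩ := hqA
      exact hp ⟨y, hyS, hy⟩
    | false =>
      obtain ⟨W, hWopen, hxW, hWS⟩ := hW x
      refine ⟨W ×ˢ ({false} : Set Bool) ∪ (W ×ˢ ({true} : Set Bool) \ {(x, true)}),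
        ?_, TopologicalSpace.GenerateOpen.basic _ (Or.inr ⟨x, W, hWopen, hxW, rfl⟩),
        (mem_union _ _ _).mpr (Or.inl (mk_mem_prod hxW rfl))⟩
      rintro ⟨y, c⟩ hq hqA
      obtain ⟨z, hzS, hz⟩ := hqA
      have hz1 : z = y := congrArg Prod.fst hz
      have hz2 : (true : Bool) = c := congrArg Prod.snd hz
      subst hz1; subst hz2
      rcases hq with ⟨_, hc⟩ | ⟨⟨hzW, _⟩, hne'⟩
      · simp at hc
      · have : z = x := hWS ⟨hzW, hzS⟩
        subst this
        exact hne' rfl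
  -- the cover by singletons
  set U : Set (Set (X × Bool)) := (fun x => ({(x, true)} : Set (X × Bool))) '' S with hUdef
  have hUopen : ∀ V ∈ U, IsOpen V := by
    rintro V ⟨x, _, rfl⟩; exact hsing x
  have hcov : closure A ⊆ ⋃₀ U := by
    rw [hAclosed.closure_eq]
    rintro p ⟨x, hxS, rfl⟩
    exact ⟨{(x, true)}, ⟨x, hxS, rfl⟩, rfl⟩
  obtain ⟨V, hVcnt, hVU, hAst⟩ := h A hAne U hUopen hcov
  -- st (⋃₀ V) U ⊆ ⋃₀ V
  have hst : st (⋃₀ V) U ⊆ ⋃₀ V := by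
    rintro p ⟨W, ⟨hWU, q, hqW, hqV⟩, hpW⟩
    obtain ⟨y, _, rfl⟩ := hWU
    obtain ⟨V', hV'V, hqV'⟩ := hqV
    obtain ⟨z, _, rfl⟩ := hVU hV'V
    rw [mem_singleton_iff] at hqW
    rw [hqW] at hqV'
    rw [mem_singleton_iff] at hqV'
    have : y = z := (Prod.ext_iff.mp hqV').1
    subst this
    exact ⟨{(y, true)}, hV'V, hpW⟩
  have hAcnt : A.Countable := by
    refine Countable.mono (hAst.trans hst) (Countable.sUnion hVcnt ?_)
    rintro t ht
    obtain ⟨x, _, rfl⟩ := hVU ht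
    exact countable_singleton _
  have hinj : Function.Injective (fun x : X => (x, true)) := by
    intro a b hab
    exact (Prod.ext_iff.mp hab).1
  have : S ⊆ (fun x : X => (x, true)) ⁻¹' A := fun x hx => ⟨x, hx, rfl⟩
  exact Countable.mono this (hAcnt.preimage hinj)
end

section
/- If f : X → Y is an open, closed, finite-to-one continuous surjection and Y is set strongly star-Lindelöf, then X is nearly set strongly star-Lindelöf. -/
open Set TopologicalSpace

/-- A space is nearly set strongly star-Lindelöf if for every subset `A` and every open cover
`U` of `X`, there is a countable `F ⊆ X` with `A ⊆ St(F,U)`. -/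
def NearlySetStronglyStarLindelof (X : Type*) [TopologicalSpace X] : Prop :=
  ∀ A : Set X, ∀ U : Set (Set X), (∀ V ∈ U, IsOpen V) → ⋃₀ U = univ →
    ∃ F : Set X, F.Countable ∧ A ⊆ st F U

/-- If `f : X → Y` is an open, closed, finite-to-one continuous surjection and `Y` is set
strongly star-Lindelöf, then `X` is nearly set strongly star-Lindelöf. -/
theorem nearlySetStronglyStarLindelof_of_preimage {X Y : Type*} [TopologicalSpace X]
    [TopologicalSpace Y] (f : X → Y) (hcont : Continuous f) (hopen : IsOpenMap f)
    (hclosed : IsClosedMap f) (hfin : ∀ y : Y, (f ⁻¹' {y}).Finite)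
    (hsurj : Function.Surjective f) (h : SetStronglyStarLindelof Y) :
    NearlySetStronglyStarLindelof X := by
  intro A U hU hcov
  rcases A.eq_empty_or_nonempty with rfl | hA
  · exact ⟨∅, countable_empty, empty_subset _⟩
  have hg : ∀ x : X, ∃ V, V ∈ U ∧ x ∈ V := by
    intro x
    have hx : x ∈ ⋃₀ U := hcov ▸ mem_univ x
    rcases hx with ⟨V, hV, hxV⟩; exact ⟨V, hV, hxV⟩
  choose g hgU hgx using hg
  set T : Y → Set (Set X) := fun y => g '' (f ⁻¹' {y}) with hT
  have hTfin : ∀ y, (T y).Finite := fun y => (hfin y).image g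
  have hTU : ∀ y, T y ⊆ U := by rintro y V ⟨x, _, rfl⟩; exact hgU x
  set W : Y → Set Y := fun y => (⋂ V ∈ T y, f '' V) \ f '' (⋃₀ T y)ᶜ with hW
  have hWopen : ∀ y, IsOpen (W y) := by
    intro y
    refine IsOpen.sdiff ?_ (hclosed _ ?_)
    · exact (hTfin y).isOpen_biInter (fun V hV => hopen V (hU V (hTU y hV)))
    · exact (isOpen_sUnion (fun V hV => hU V (hTU y hV))).isClosed_compl
  have hyW : ∀ y, y ∈ W y := by
    intro y
    constructor
    · refine mem_iInter₂.2 ?_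
      rintro V ⟨x, hx, rfl⟩
      exact ⟨x, hgx x, hx⟩
    · rintro ⟨x, hx, rfl⟩
      exact hx ⟨g x, ⟨x, rfl, rfl⟩, hgx x⟩
  have hpre : ∀ y, f ⁻¹' (W y) ⊆ ⋃₀ T y := by
    intro y x hx
    by_contra hc
    exact hx.2 ⟨x, hc, rfl⟩
  have hmeets : ∀ y z, z ∈ W y → ∀ V ∈ T y, ∃ x, f x = z ∧ x ∈ V := by
    intro y z hz V hV
    have hz1 := mem_iInter₂.1 hz.1 V hV
    rcases hz1 with ⟨x, hx, rfl⟩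
    exact ⟨x, rfl, hx⟩
  obtain ⟨F', hF'c, hF'sub, hB⟩ := h (f '' A) (hA.image f) (range W)
    (by rintro _ ⟨y, rfl⟩; exact hWopen y)
    (fun z _ => ⟨W z, mem_range_self z, hyW z⟩)
  refine ⟨f ⁻¹' F', ?_, ?_⟩
  · have he : f ⁻¹' F' = ⋃ z ∈ F', f ⁻¹' {z} := by ext x; simp
    rw [he]
    exact hF'c.biUnion (fun z _ => (hfin z).countable)
  · intro a ha
    have hfa : f a ∈ st F' (range W) := hB ⟨a, ha, rfl⟩
    rcases hfa with ⟨V', ⟨hV'mem, hV'ne⟩, hfa⟩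
    rcases hV'mem with ⟨y, rfl⟩
    rcases hV'ne with ⟨z, hzW, hzF'⟩
    rcases hpre y hfa with ⟨V, hVT, haV⟩
    rcases hmeets y z hzW V hVT with ⟨x, hxz, hxV⟩
    exact ⟨V, ⟨hTU y hVT, ⟨x, hxV, by simp [mem_preimage, hxz, hzF']⟩⟩, haV⟩
end

section
/- If f : X → Y is an open perfect continuous surjection (closed with compact fibers) and Y is set star-Lindelöf, then X is nearly set star-Lindelöf. -/
open Set TopologicalSpace

/-- A space is nearly set star-Lindelöf if for every subset `A` and every open cover `U` of `X`,
there is a countable `V ⊆ U` with `A ⊆ St(⋃₀ V, U)`. -/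
def NearlySetStarLindelof (X : Type*) [TopologicalSpace X] : Prop :=
  ∀ A : Set X, ∀ U : Set (Set X), (∀ V ∈ U, IsOpen V) → ⋃₀ U = univ →
    ∃ V : Set (Set X), V.Countable ∧ V ⊆ U ∧ A ⊆ st (⋃₀ V) U

/-- If `f : X → Y` is an open perfect continuous surjection and `Y` is set star-Lindelöf,
then `X` is nearly set star-Lindelöf. -/
theorem nearlySetStarLindelof_of_preimage {X Y : Type*} [TopologicalSpace X] [TopologicalSpace Y]
    (f : X → Y) (hcont : Continuous f) (hopen : IsOpenMap f) (hclosed : IsClosedMap f)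
    (hcpt : ∀ y : Y, IsCompact (f ⁻¹' {y})) (hsurj : Function.Surjective f)
    (h : SetStarLindelof Y) : NearlySetStarLindelof X := by
  intro A U hU hcover
  rcases A.eq_empty_or_nonempty with rfl | hA
  · exact ⟨∅, countable_empty, empty_subset _, by simp⟩
  classical
  have hsub : ∀ y : Y, ∃ t : Finset {V // V ∈ U}, f ⁻¹' {y} ⊆ ⋃ G ∈ t, (G : Set X) := by
    intro y
    apply (hcpt y).elim_finite_subcover (fun G : {V // V ∈ U} => (G : Set X))
      (fun G => hU G G.2)
    intro x _
    have hx : x ∈ ⋃₀ U := hcover ▸ mem_univ x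
    rcases hx with ⟨G, hG, hxG⟩
    exact mem_iUnion.2 ⟨⟨G, hG⟩, hxG⟩
  choose t ht using hsub
  set t' : Y → Finset {V // V ∈ U} :=
    fun y => (t y).filter (fun G => ((G : Set X) ∩ f ⁻¹' {y}).Nonempty) with ht'
  have hfib : ∀ y, f ⁻¹' {y} ⊆ ⋃ G ∈ t' y, (G : Set X) := by
    intro y x hx
    rcases mem_iUnion₂.1 (ht y hx) with ⟨G, hG, hxG⟩
    exact mem_iUnion₂.2 ⟨G, Finset.mem_filter.2 ⟨hG, ⟨x, hxG, hx⟩⟩, hxG⟩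
  set Gy : Y → Set X := fun y => ⋃ G ∈ t' y, (G : Set X) with hGy
  have hGyopen : ∀ y, IsOpen (Gy y) := fun y => isOpen_biUnion (fun G _ => hU G G.2)
  set W : Y → Set Y := fun y => (f '' (Gy y)ᶜ)ᶜ with hW
  have hWpre : ∀ y, f ⁻¹' (W y) ⊆ Gy y := by
    intro y x hx
    by_contra hxn
    exact hx ⟨x, hxn, rfl⟩
  set Vy : Y → Set Y := fun y => W y ∩ ⋂ G ∈ t' y, f '' (G : Set X) with hVy
  have hVyopen : ∀ y, IsOpen (Vy y) := by
    intro y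
    exact ((hclosed _ (hGyopen y).isClosed_compl).isOpen_compl).inter
      (isOpen_biInter_finset fun G _ => hopen _ (hU G G.2))
  have hyVy : ∀ y, y ∈ Vy y := by
    intro y
    constructor
    · rintro ⟨x, hx1, hx2⟩
      exact hx1 (hfib y (by simp [hx2]))
    · refine mem_iInter₂.2 fun G hG => ?_
      rcases Finset.mem_filter.1 hG with ⟨-, x, hxG, hxf⟩
      exact ⟨x, hxG, hxf⟩
  obtain ⟨V, Vcnt, Vsub, hst⟩ := h (f '' A) (hA.image f) (range Vy)
    (by rintro _ ⟨y, rfl⟩; exact hVyopen y)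
    (fun z _ => ⟨Vy z, ⟨z, rfl⟩, hyVy z⟩)
  have hgex : ∀ S ∈ V, ∃ y, Vy y = S := fun S hS => Vsub hS
  haveI : Nonempty Y := ⟨f hA.some⟩
  choose! g hg using hgex
  haveI := Vcnt.to_subtype
  set C : Set Y := range (fun S : V => g S) with hC
  have Ccnt : C.Countable := countable_range _
  refine ⟨⋃ y ∈ C, (Subtype.val '' ((t' y : Set {V // V ∈ U}))),
    Ccnt.biUnion (fun y _ => ((t' y).finite_toSet.image _).countable), ?_, ?_⟩
  · rintro G hG
    simp only [mem_iUnion] at hG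
    rcases hG with ⟨y, _, ⟨G', _, rfl⟩⟩
    exact G'.2
  · intro a ha
    rcases hst ⟨a, ha, rfl⟩ with ⟨S, ⟨hSW, ⟨z, hz1, hz2⟩⟩, hfaS⟩
    rcases hSW with ⟨y', rfl⟩
    -- a lies in some member G of t' y'
    rcases mem_iUnion₂.1 (hWpre y' hfaS.1) with ⟨G, hGt, haG⟩
    -- z ∈ Vy y' gives z ∈ f '' G
    have hzfG : z ∈ f '' (G : Set X) := mem_iInter₂.1 hz1.2 G hGt
    rcases hzfG with ⟨x, hxG, hxz⟩
    -- z lies in some S'' ∈ V, and S'' = Vy y'' with y'' ∈ C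
    rcases hz2 with ⟨S'', hS''V, hzS''⟩
    have hS'' : Vy (g S'') = S'' := hg S'' hS''V
    have hxW : x ∈ f ⁻¹' (W (g S'')) := by
      have : z ∈ Vy (g S'') := hS''.symm ▸ hzS''
      simpa [mem_preimage, hxz] using this.1
    rcases mem_iUnion₂.1 (hWpre _ hxW) with ⟨G', hG't, hxG'⟩
    refine ⟨G, ⟨G.2, ⟨x, hxG, ?_⟩⟩, haG⟩
    refine ⟨(G' : Set X), ?_, hxG'⟩
    simp only [mem_iUnion]
    exact ⟨g S'', ⟨⟨S'', hS''V⟩, rfl⟩, ⟨G', hG't, rfl⟩⟩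
end

section
/- The Isbell–Mrówka space ψ(𝒜) over an almost disjoint family 𝒜 of cardinality ω₁ is not set strongly star-Lindelöf. -/
open Set TopologicalSpace

/-- The Isbell–Mrówka `ψ`-space topology on `𝒜 ⊕ ℕ`: natural numbers are isolated and basic
neighborhoods of `A ∈ 𝒜` are `{A} ∪ (A \ F)` for finite `F ⊆ ω`. -/
def psiTopology (𝒜 : Set (Set ℕ)) : TopologicalSpace (↥𝒜 ⊕ ℕ) :=
  generateFrom
    ({S | ∃ n : ℕ, S = {Sum.inr n}} ∪
     {S | ∃ (A : ↥𝒜) (F : Set ℕ), F.Finite ∧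
        S = {Sum.inl A} ∪ Sum.inr '' ((A : Set ℕ) \ F)})

/-- The Isbell–Mrówka space over an almost disjoint family of cardinality `ω₁` is not
set strongly star-Lindelöf. -/
theorem psiSpace_not_setStronglyStarLindelof (𝒜 : Set (Set ℕ))
    (hinf : ∀ A ∈ 𝒜, A.Infinite)
    (had : ∀ A ∈ 𝒜, ∀ B ∈ 𝒜, A ≠ B → (A ∩ B).Finite)
    (hcard : Cardinal.mk ↥𝒜 = Cardinal.aleph 1) :
    ¬ @SetStronglyStarLindelof (↥𝒜 ⊕ ℕ) (psiTopology 𝒜) := by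
  letI : TopologicalSpace (↥𝒜 ⊕ ℕ) := psiTopology 𝒜
  intro h
  -- the closed discrete copy of 𝒜
  set A : Set (↥𝒜 ⊕ ℕ) := Set.range Sum.inl with hA
  have hAne : A.Nonempty := by
    have : Cardinal.mk ↥𝒜 ≠ 0 := by
      rw [hcard]; exact (Cardinal.aleph_pos 1).ne'
    rcases Cardinal.mk_ne_zero_iff.mp this with ⟨a⟩
    exact ⟨Sum.inl a, ⟨a, rfl⟩⟩
  -- A is closed
  have hclosed : IsClosed A := by
    constructor
    have : Aᶜ = ⋃ n : ℕ, {Sum.inr n} := by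
      ext x
      cases x with
      | inl a => simp [hA]
      | inr n => simp [hA]
    rw [this]
    apply isOpen_iUnion
    intro n
    exact TopologicalSpace.isOpen_generateFrom_of_mem (Or.inl ⟨n, rfl⟩)
  have hcl : closure A = A := hclosed.closure_eq
  -- the cover
  set U : Set (Set (↥𝒜 ⊕ ℕ)) :=
    {S | ∃ B : ↥𝒜, S = {Sum.inl B} ∪ Sum.inr '' (B : Set ℕ)} with hU
  have hUopen : ∀ V ∈ U, IsOpen V := by
    rintro V ⟨B, rfl⟩
    apply TopologicalSpace.isOpen_generateFrom_of_mem
    refine Or.inr ⟨B, ∅, finite_empty, ?_⟩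
    simp
  have hcov : closure A ⊆ ⋃₀ U := by
    rw [hcl]
    rintro x ⟨B, rfl⟩
    exact ⟨{Sum.inl B} ∪ Sum.inr '' (B : Set ℕ), ⟨B, rfl⟩, Or.inl rfl⟩
  obtain ⟨F, hFc, hFsub, hst⟩ := h A hAne U hUopen hcov
  rw [hcl] at hFsub
  -- every point of A must lie in F
  have hAF : A ⊆ F := by
    rintro x ⟨B, rfl⟩
    obtain ⟨V, ⟨⟨C, rfl⟩, y, hyV, hyF⟩, hxV⟩ := hst ⟨B, rfl⟩
    have hBC : B = C := by
      rcases hxV with hx | ⟨n, _, hn⟩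
      · exact Sum.inl.inj hx
      · exact absurd hn (by simp)
    obtain ⟨D, hD⟩ := hFsub hyF
    have : y = Sum.inl C := by
      rcases hyV with hy | ⟨n, _, hn⟩
      · exact hy
      · exact absurd (hD.trans hn.symm) (by simp)
    rw [hBC, ← this]
    exact hyF
  have hAc : A.Countable := hFc.mono hAF
  have : Countable ↥𝒜 := by
    have h1 : Countable ↥A := hAc.to_subtype
    exact Countable.of_equiv ↥A (Equiv.ofInjective _ (Sum.inl_injective)).symm
  have hle : Cardinal.mk ↥𝒜 ≤ Cardinal.aleph0 := Cardinal.mk_le_aleph0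
  rw [hcard] at hle
  exact absurd hle Cardinal.aleph0_lt_aleph_one.not_ge
end

section
/- Let Y be the one-point compactification of a discrete space D of cardinality continuum, and let X = (Y × [0,ω)) ∪ (D × {ω}) be the subspace of Y × [0,ω] (where [0,ω] = ω+1 with the order topology). Then X has a dense Lindelöf subspace (namely Y × [0,ω)) but X is not set star-Lindelöf. -/
open Set TopologicalSpace

/-- The subspace `X = (Y × [0,ω)) ∪ (D × {ω})` of `Y × [0,ω]`, where `Y = D ∪ {∞}` is the
one-point compactification of the discrete space `D`: i.e. everything except the point
`(∞, ⊤)`. -/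
abbrev SongSpace (D : Type*) [TopologicalSpace D] : Type _ :=
  ↥({((OnePoint.infty : OnePoint D), (⊤ : ℕ∞))}ᶜ : Set (OnePoint D × ℕ∞))

/-- `X` has the dense Lindelöf subspace `Y × [0,ω)`, yet `X` is not set star-Lindelöf. -/
theorem songSpace_dense_lindelof_not_setStarLindelof (D : Type*) [TopologicalSpace D]
    [DiscreteTopology D] (hD : Cardinal.mk D = Cardinal.continuum) :
    Dense {x : SongSpace D | (x : OnePoint D × ℕ∞).2 ≠ ⊤} ∧
    LindelofSpace ↥{x : SongSpace D | (x : OnePoint D × ℕ∞).2 ≠ ⊤} ∧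
    ¬ SetStarLindelof (SongSpace D) := by
  refine ⟨?_, ?_, ?_⟩
  · -- Dense
    intro x
    by_cases hx : (x : OnePoint D × ℕ∞).2 = ⊤
    · have hmem : ∀ n : ℕ, ((x : OnePoint D × ℕ∞).1, (n : ℕ∞)) ∈
          ({((OnePoint.infty : OnePoint D), (⊤ : ℕ∞))}ᶜ : Set (OnePoint D × ℕ∞)) := by
        intro n
        simp only [mem_compl_iff, mem_singleton_iff]
        intro h
        exact ENat.coe_ne_top n (congrArg Prod.snd h)
      set f : ℕ → SongSpace D := fun n => ⟨((x : OnePoint D × ℕ∞).1, (n : ℕ∞)), hmem n⟩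
      have hf : Filter.Tendsto f Filter.atTop (nhds x) := by
        rw [tendsto_subtype_rng]
        have hxv : (x : OnePoint D × ℕ∞) = ((x : OnePoint D × ℕ∞).1, (⊤ : ℕ∞)) :=
          Prod.ext rfl hx
        rw [hxv]
        refine Filter.Tendsto.prodMk_nhds tendsto_const_nhds ?_
        rw [ENat.tendsto_nhds_top_iff_natCast_lt]
        intro n
        filter_upwards [Filter.eventually_gt_atTop n] with a ha
        exact_mod_cast ha
      refine mem_closure_of_tendsto hf (Filter.Eventually.of_forall fun n => ?_)
      exact ENat.coe_ne_top n
    · exact subset_closure hx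
  · -- Lindelöf
    set g : OnePoint D × ℕ → ↥{x : SongSpace D | (x : OnePoint D × ℕ∞).2 ≠ ⊤} :=
      fun p => ⟨⟨(p.1, (p.2 : ℕ∞)), by
        simp only [mem_compl_iff, mem_singleton_iff]
        intro h
        exact ENat.coe_ne_top p.2 (congrArg Prod.snd h)⟩, ENat.coe_ne_top p.2⟩
    have hgc : Continuous g := by
      refine Continuous.subtype_mk (Continuous.subtype_mk ?_ _) _
      exact continuous_fst.prodMk (ENat.isOpenEmbedding_natCast.continuous.comp continuous_snd)
    have hgs : Function.Surjective g := by
      rintro ⟨⟨⟨a, b⟩, hab⟩, hb⟩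
      simp only [mem_setOf_eq] at hb
      obtain ⟨n, hn⟩ := WithTop.ne_top_iff_exists.mp hb
      exact ⟨(a, n), Subtype.ext (Subtype.ext (Prod.ext rfl hn))⟩
    have : IsLindelof (range g) := isLindelof_range hgc
    rw [hgs.range_eq] at this
    exact ⟨this⟩
  · -- not set star-Lindelöf
    intro h
    have hne : Nonempty D := by
      rw [← Cardinal.mk_ne_zero_iff, hD]
      exact Cardinal.continuum_ne_zero
    obtain ⟨d₀⟩ := hne
    set S : D → Set (SongSpace D) := fun d => {x | (x : OnePoint D × ℕ∞).1 = (d : OnePoint D)}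
      with hS
    have hmemS : ∀ (d : D) (m : ℕ∞), ((d : OnePoint D), m) ∈
        ({((OnePoint.infty : OnePoint D), (⊤ : ℕ∞))}ᶜ : Set (OnePoint D × ℕ∞)) := by
      intro d m
      simp only [mem_compl_iff, mem_singleton_iff]
      intro hcon
      exact OnePoint.coe_ne_infty d (congrArg Prod.fst hcon)
    set A : Set (SongSpace D) := {x | (x : OnePoint D × ℕ∞).2 = ⊤} with hA
    have hAne : A.Nonempty := ⟨⟨((d₀ : OnePoint D), ⊤), hmemS d₀ ⊤⟩, rfl⟩
    set U : Set (Set (SongSpace D)) := range S with hU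
    have hUopen : ∀ V ∈ U, IsOpen V := by
      rintro _ ⟨d, rfl⟩
      have h1 : IsOpen ({(d : OnePoint D)} : Set (OnePoint D)) := by
        rw [← Set.image_singleton]
        exact OnePoint.isOpenEmbedding_coe.isOpenMap _ (isOpen_discrete _)
      exact (h1.preimage continuous_fst).preimage continuous_subtype_val
    have hAclosed : IsClosed A := by
      have : IsClosed ({(⊤ : ℕ∞)} : Set ℕ∞) := isClosed_singleton
      exact (this.preimage continuous_snd).preimage continuous_subtype_val
    have hcov : closure A ⊆ ⋃₀ U := by
      rw [hAclosed.closure_eq]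
      intro x hxA
      have hx1 : (x : OnePoint D × ℕ∞).1 ≠ OnePoint.infty := by
        intro hcon
        apply x.2
        simp only [mem_singleton_iff]
        exact Prod.ext hcon hxA
      obtain ⟨d, hd⟩ := Option.ne_none_iff_exists.mp hx1
      exact ⟨S d, ⟨d, rfl⟩, hd.symm⟩
    obtain ⟨V, hVc, hVU, hAst⟩ := h A hAne U hUopen hcov
    -- every S d belongs to V
    have hall : ∀ d : D, S d ∈ V := by
      intro d
      have hxd : (⟨((d : OnePoint D), ⊤), hmemS d ⊤⟩ : SongSpace D) ∈ A := rfl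
      obtain ⟨M, ⟨hMU, y, hy1, W, hWV, hyW⟩, hxM⟩ := hAst hxd
      obtain ⟨d', rfl⟩ := hMU
      have hd' : d' = d := OnePoint.coe_eq_coe.mp hxM.symm
      subst hd'
      obtain ⟨d'', rfl⟩ := hVU hWV
      have : (d'' : OnePoint D) = (d' : OnePoint D) := by
        rw [← hyW, ← hy1]
      rw [OnePoint.coe_eq_coe] at this
      rwa [this] at hWV
    have hSinj : Function.Injective S := by
      intro a b hab
      have ha : (⟨((a : OnePoint D), 0), hmemS a 0⟩ : SongSpace D) ∈ S a := rfl
      rw [hab] at ha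
      exact OnePoint.coe_eq_coe.mp ha
    have : Countable D := by
      haveI := hVc.to_subtype
      exact Function.Injective.countable
        (f := fun d : D => (⟨S d, hall d⟩ : V)) (fun a b hab => hSinj (congrArg Subtype.val hab))
    have := Cardinal.mk_le_aleph0 (α := D)
    rw [hD] at this
    exact absurd this (not_le.mpr Cardinal.aleph0_lt_continuum)
end

section
/- Let X = [0,ω₁) with the order topology and let Y = [0,ω₁] with the topology in which every α < ω₁ is isolated and a set U containing ω₁ is open iff Y \ U is countable. Then the product X × Y is not star-Lindelöf (and hence not set star-Lindelöf). -/
open Set TopologicalSpace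

/-- The space `[0, ω₁)` of countable ordinals. -/
abbrev Omega1 : Type _ := (Cardinal.aleph 1).ord.ToType

/-- The topology on `Y = [0, ω₁]` (here `WithTop Omega1`) in which every `α < ω₁` is isolated
and a set containing `ω₁` is open iff its complement is countable. -/
def coCountableTopAt (α : Type*) : TopologicalSpace (WithTop α) where
  IsOpen S := (⊤ : WithTop α) ∈ S → Sᶜ.Countable
  isOpen_univ := by simp
  isOpen_inter := by
    intro s t hs ht hst
    rw [Set.compl_inter]
    exact (hs hst.1).union (ht hst.2)
  isOpen_sUnion := by
    intro s hs hmem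
    obtain ⟨t, hts, hmemt⟩ := hmem
    exact ((hs t hts) hmemt).mono (compl_subset_compl.mpr (subset_sUnion_of_mem hts))

/-!
The points `(ξ + 1, ξ + 1)` of the diagonal are isolated in `X × Y`, since successors are isolated
in `X` and countable ordinals in `Y`. They also form a closed set: a point `(x, ω₁)` is separated
from them by the box `[0, x] × (x, ω₁]`, whose second factor is cocountable, and an open row
`X × {η}` contains at most one of them. An uncountable closed set `D` of isolated points rules out
star-Lindelöfness: in the cover by `Dᶜ` and the singletons of `D`, the star of a countable
subfamily misses every `p ∈ D` whose singleton was not chosen.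
-/

universe u v

namespace Omega1

instance : NoMaxOrder Omega1 := Cardinal.noMaxOrder (Cardinal.aleph0_le_aleph 1)

instance : Uncountable Omega1 := by
  rw [← Cardinal.aleph0_lt_mk_iff, Cardinal.mk_ord_toType]
  exact Cardinal.aleph0_lt_aleph_one

theorem countable_Iio (a : Omega1) : (Iio a).Countable := by
  rw [← Cardinal.le_aleph0_iff_set_countable, ← Cardinal.lt_aleph_one_iff]
  simpa using Cardinal.mk_Iio_lt a (by simp)

theorem countable_Iic (a : Omega1) : (Iic a).Countable :=
  Order.Iio_succ a ▸ countable_Iio _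

noncomputable def orderIso : Omega1.{u} ≃o Omega1.{v} :=
  OrderIso.ofRelIsoLT <| Classical.choice <| Ordinal.lift_type_eq.{u, v, 0}.1 <| by
    simp [Ordinal.type_toType]

end Omega1

theorem not_starLindelof_of_isClosed_of_isOpen_singleton {Z : Type*} [TopologicalSpace Z]
    {D : Set Z} (hD : IsClosed D) (hD_unc : ¬ D.Countable) (hD_iso : ∀ p ∈ D, IsOpen {p}) :
    ¬ StarLindelof Z := by
  intro h
  set U : Set (Set Z) := insert Dᶜ ((fun p => {p}) '' D)
  have hU_open : ∀ W ∈ U, IsOpen W := by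
    rintro W (rfl | ⟨p, hp, rfl⟩)
    exacts [hD.isOpen_compl, hD_iso p hp]
  have hU_cover : ⋃₀ U = univ := by
    refine eq_univ_of_forall fun p => ?_
    by_cases hp : p ∈ D
    exacts [⟨{p}, Or.inr ⟨p, hp, rfl⟩, rfl⟩, ⟨Dᶜ, Or.inl rfl, hp⟩]
  have h_unique : ∀ p ∈ D, ∀ W ∈ U, p ∈ W → W = {p} := by
    rintro p hp W (rfl | ⟨q, -, rfl⟩) hpW
    exacts [absurd hp hpW, by rw [mem_singleton_iff.1 hpW]]
  obtain ⟨V, hV_count, hVU, hV_star⟩ := h U hU_open hU_cover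
  obtain ⟨p, hp, hpV⟩ : ∃ p ∈ D, {p} ∉ V := by
    by_contra! hall
    exact hD_unc ((hV_count.preimage singleton_injective).mono hall)
  obtain ⟨W, ⟨hWU, q, hqW, W', hW'V, hqW'⟩, hpW⟩ := hV_star.symm ▸ mem_univ p
  rw [h_unique p hp W hWU hpW, mem_singleton_iff] at hqW
  subst hqW
  exact hpV (h_unique q hp W' (hVU hW'V) hqW' ▸ hW'V)

section CoCountableTop

attribute [local instance] coCountableTopAt

theorem coCountableTopAt_isOpen_singleton_coe {β : Type*} (b : β) :
    IsOpen {(b : WithTop β)} :=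
  fun h => (WithTop.top_ne_coe h).elim

theorem coCountableTopAt_isOpen_Ioi {β : Type*} [LinearOrder β] {b : β}
    (hb : (Iic b).Countable) : IsOpen (Ioi (b : WithTop β)) := fun _ => by
  rw [compl_Ioi, WithTop.Iic_coe]
  exact hb.image _

open Order

variable {α β : Type*} [LinearOrder α] [SuccOrder α] [NoMaxOrder α] [LinearOrder β]

def succDiagonal (e : β ≃o α) : Set (α × WithTop β) :=
  range fun a => (succ a, (e.symm (succ a) : WithTop β))

theorem not_countable_succDiagonal [Uncountable α] (e : β ≃o α) :
    ¬ (succDiagonal e).Countable := by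
  set f : α → α × WithTop β := fun a => (succ a, (e.symm (succ a) : WithTop β))
  have hf : Function.Injective f := fun _ _ hab => succ_injective (Prod.ext_iff.1 hab).1
  exact fun h => not_countable_univ <|
    (h.preimage hf).mono fun a _ => show f a ∈ range f from mem_range_self a

variable [TopologicalSpace α] [OrderTopology α]

theorem isOpen_singleton_of_mem_succDiagonal (e : β ≃o α) {p : α × WithTop β}
    (hp : p ∈ succDiagonal e) : IsOpen {p} := by
  obtain ⟨a, rfl⟩ := hp
  rw [← singleton_prod_singleton]
  exact (SuccOrder.isOpen_singleton_of_not_isSuccPrelimit (not_isSuccPrelimit_succ a)).prod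
    (coCountableTopAt_isOpen_singleton_coe _)

theorem isClosed_succDiagonal (e : β ≃o α) (hIic : ∀ b : β, (Iic b).Countable) :
    IsClosed (succDiagonal e) := by
  refine isOpen_compl_iff.1 <| isOpen_iff_forall_mem_open.2 fun ⟨x, y⟩ hxy => ?_
  induction y using WithTop.recTopCoe with
  | top =>
    refine ⟨Iic x ×ˢ Ioi (e.symm x : WithTop β), ?_,
      (Iio_succ x ▸ isOpen_Iio).prod (coCountableTopAt_isOpen_Ioi (hIic _)), le_rfl,
      WithTop.coe_lt_top _⟩
    rintro _ ⟨hle, hlt⟩ ⟨a, rfl⟩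
    exact (e.symm.lt_iff_lt.1 (WithTop.coe_lt_coe.1 hlt)).not_ge hle
  | coe b =>
    have h_slice : {x' | (x', (b : WithTop β)) ∈ succDiagonal e}.Subsingleton := by
      rintro _ ⟨a, ha⟩ _ ⟨a', ha'⟩
      simp only [Prod.mk.injEq, WithTop.coe_inj] at ha ha'
      rw [← ha.1, ← ha'.1, ← e.apply_symm_apply (succ a), ← e.apply_symm_apply (succ a'),
        ha.2, ha'.2]
    exact ⟨_ ×ˢ {(b : WithTop β)}, fun _ ⟨hp, hpb⟩ => (mem_singleton_iff.1 hpb ▸ hp :),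
      h_slice.isClosed.isOpen_compl.prod (coCountableTopAt_isOpen_singleton_coe b), hxy, rfl⟩

theorem not_starLindelof_prod_withTop [Uncountable α] (e : β ≃o α)
    (hIic : ∀ b : β, (Iic b).Countable) : ¬ StarLindelof (α × WithTop β) :=
  not_starLindelof_of_isClosed_of_isOpen_singleton (isClosed_succDiagonal e hIic)
    (not_countable_succDiagonal e) fun _ => isOpen_singleton_of_mem_succDiagonal e

end CoCountableTop

/-- With `X = [0, ω₁)` carrying the order topology and `Y = [0, ω₁]` as above, the product
`X × Y` is not star-Lindelöf. -/
theorem product_not_starLindelof :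
    ¬ @StarLindelof (Omega1 × WithTop Omega1)
      (@instTopologicalSpaceProd Omega1 (WithTop Omega1)
        (Preorder.topology Omega1) (coCountableTopAt Omega1)) := by
  let := Preorder.topology Omega1
  have : OrderTopology Omega1 := ⟨rfl⟩
  exact not_starLindelof_prod_withTop Omega1.orderIso Omega1.countable_Iic
end
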